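/- Let μ be a strong limit cardinal of cofinality ℵ₀. If there is a universal locally finite group of cardinality μ, then for every cardinal λ < μ and every ℵ₀-indecomposable locally finite group H of cardinality λ there exist an index set I of cardinality ≤ μ and a family ⟨G_α : α ∈ I⟩ of locally finite groups, each of cardinality μ and each containing H as a subgroup, such that every locally finite group G of cardinality μ containing H as a subgroup embeds into some G_α over H. -/

import Mathlib

/-! Take for the family all embeddings of `H` into one universal group `U`, with `G_α = U`;
universality of `U` gives the embedding property at once, so the content is the bound on the
number of embeddings. Cofinality `ℵ₀` and local finiteness write `U` as the union of an increasing
chain `K 0 ≤ K 1 ≤ ⋯` of subgroups of size `< μ`. By `ℵ₀`-indecomposability every homomorphism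
`H → U` lands in some `K n`, so there are at most `∑ₙ |K n| ^ λ ≤ μ` of them, as `μ` is a
strong limit. -/

universe u
open Cardinal

/-- A group is locally finite if every finitely generated subgroup is finite. -/
def LocallyFiniteGroup (G : Type u) [Group G] : Prop :=
  ∀ s : Finset G, Set.Finite ((Subgroup.closure (s : Set G) : Subgroup G) : Set G)

/-- A group `G` is `θ`-indecomposable when every `⊆`-increasing sequence
`⟨M_i : i < θ⟩` of subgroups of `G` with union `G` contains `G` as a member. -/
def GroupIndecomp (θ : Cardinal.{u}) (G : Type u) [Group G] : Prop :=
  ∀ M : θ.ord.ToType → Subgroup G, Monotone M → (⨆ i, M i) = ⊤ → ∃ i, M i = ⊤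

/-- `G` is a universal locally finite group of cardinality `μ`. -/
def UniversalLF (μ : Cardinal.{u}) (G : Type u) [Group G] : Prop :=
  LocallyFiniteGroup G ∧ #G = μ ∧
    ∀ (H : Type u) (_ : Group H), LocallyFiniteGroup H → #H = μ →
      ∃ f : H →* G, Function.Injective f

namespace Cardinal

theorem IsStrongLimit.power_lt {μ κ ν : Cardinal} (hμ : IsStrongLimit μ) (hκ : κ < μ)
    (hν : ν < μ) : κ ^ ν < μ :=
  calc κ ^ ν ≤ (2 ^ κ) ^ ν := power_le_power_right (cantor κ).le
    _ = 2 ^ (κ * ν) := power_mul.symm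
    _ < μ := hμ.isStrongPrelimit (mul_lt_of_lt hμ.aleph0_le hκ hν)

theorem aleph0_le_of_cof_ord_eq_aleph0 {c : Cardinal} (hc : c.ord.cof = ℵ₀) : ℵ₀ ≤ c :=
  hc ▸ (Ordinal.cof_le_card _).trans_eq (card_ord c)

theorem mk_Iic_lt_of_ord_eq {α : Type u} [LinearOrder α] [WellFoundedLT α] [Infinite α]
    (hα : (#α).ord = Ordinal.type (α := α) (· < ·)) (a : α) : #(Set.Iic a) < #α := by
  rw [← Set.Iio_insert]
  exact mk_insert_le.trans_lt <|
    add_lt_of_lt (aleph0_le_mk α) (mk_Iio_lt a hα) (one_lt_aleph0.trans_le (aleph0_le_mk α))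

theorem exists_monotone_iUnion_eq_univ_of_cof_ord_eq_aleph0 {α : Type u}
    (hcof : (#α).ord.cof = ℵ₀) :
    ∃ S : ℕ → Set α, Monotone S ∧ (⋃ n, S n) = Set.univ ∧ ∀ n, #(S n) < #α := by
  obtain ⟨b⟩ : Nonempty (α ≃ (#α).ord.ToType) := by rw [← Cardinal.eq, mk_ord_toType]
  obtain ⟨s, hs_cofinal, hs_card⟩ := Order.exists_cof_eq (#α).ord.ToType
  rw [Ordinal.cof_toType, hcof] at hs_card
  have : Countable s := mk_le_aleph0_iff.1 hs_card.le
  have : Infinite s := infinite_iff.2 hs_card.ge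
  obtain ⟨g, hg⟩ := exists_surjective_nat s
  have : Infinite (#α).ord.ToType :=
    infinite_iff.2 <| (mk_ord_toType _).symm ▸ aleph0_le_of_cof_ord_eq_aleph0 hcof
  refine ⟨fun n ↦ b ⁻¹' Set.Iic (partialSups (fun k ↦ (g k : (#α).ord.ToType)) n),
    fun m n hmn ↦ Set.preimage_mono (Set.Iic_subset_Iic.2 ((partialSups _).monotone hmn)),
    Set.eq_univ_of_forall fun x ↦ ?_, fun n ↦ ?_⟩
  · obtain ⟨y, hys, hxy⟩ := hs_cofinal (b x)
    obtain ⟨n, hn⟩ := hg ⟨y, hys⟩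
    refine Set.mem_iUnion.2 ⟨n, hxy.trans ?_⟩
    simpa [hn] using le_partialSups (fun k ↦ (g k : (#α).ord.ToType)) n
  · refine (mk_preimage_of_injective b _ b.injective).trans_lt ?_
    simpa using mk_Iic_lt_of_ord_eq (α := (#α).ord.ToType)
      (by rw [mk_ord_toType, Ordinal.type_toType]) _

theorem mk_monoidHom_le_power (H K : Type u) [Group H] [Group K] : #(H →* K) ≤ #K ^ #H :=
  power_def K H ▸ mk_le_of_injective DFunLike.coe_injective

end Cardinal

theorem Subgroup.cardinalMk_closure_le_max {G : Type u} [Group G] (s : Set G) :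
    #(closure s) ≤ max #s ℵ₀ := by
  rcases isEmpty_or_nonempty s with hs | hs
  · rw [Set.isEmpty_coe_sort.1 hs, closure_empty]
    exact le_max_of_le_right (mk_le_aleph0_iff.2 inferInstance)
  · rw [FreeGroup.closure_eq_range, ← mk_freeGroup s]
    exact mk_range_le

theorem LocallyFiniteGroup.mk_closure_lt {G : Type u} [Group G] (hG : LocallyFiniteGroup G)
    {κ : Cardinal.{u}} (hκ : ℵ₀ ≤ κ) {s : Set G} (hs : #s < κ) :
    #(Subgroup.closure s) < κ := by
  by_cases hfin : s.Finite
  · have := hG hfin.toFinset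
    rw [Set.Finite.coe_toFinset] at this
    exact this.lt_aleph0.trans_le hκ
  · have : Infinite s := Set.infinite_coe_iff.2 hfin
    refine (Subgroup.cardinalMk_closure_le_max s).trans_lt ?_
    rwa [max_eq_left (aleph0_le_mk s)]

theorem LocallyFiniteGroup.exists_monotone_iSup_eq_top {G : Type u} [Group G]
    (hG : LocallyFiniteGroup G) (hcof : (#G).ord.cof = ℵ₀) :
    ∃ K : ℕ → Subgroup G, Monotone K ∧ ⨆ n, K n = ⊤ ∧ ∀ n, #(K n) < #G := by
  obtain ⟨S, hS_mono, hS_cover, hS_card⟩ := exists_monotone_iUnion_eq_univ_of_cof_ord_eq_aleph0 hcof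
  refine ⟨fun n ↦ Subgroup.closure (S n), fun m n hmn ↦ Subgroup.closure_mono (hS_mono hmn), ?_,
    fun n ↦ hG.mk_closure_lt (aleph0_le_of_cof_ord_eq_aleph0 hcof) (hS_card n)⟩
  rw [← Subgroup.closure_iUnion, hS_cover, Subgroup.closure_univ]

theorem GroupIndecomp.exists_eq_top_of_nat {H : Type u} [Group H] (hH : GroupIndecomp ℵ₀ H)
    {M : ℕ → Subgroup H} (hM : Monotone M) (hM_top : ⨆ n, M n = ⊤) : ∃ n, M n = ⊤ := by
  obtain ⟨e⟩ : Nonempty ((· < · : (ℵ₀ : Cardinal.{u}).ord.ToType → _ → Prop) ≃r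
      (· < · : ℕ → ℕ → Prop)) := by
    rw [← Ordinal.lift_type_eq.{u, 0, 0}]
    simp
  let e : (ℵ₀ : Cardinal.{u}).ord.ToType ≃o ℕ := .ofRelIsoLT e
  obtain ⟨i, hi⟩ := hH (M ∘ e) (hM.comp e.monotone) (by rwa [← e.toEquiv.iSup_comp] at hM_top)
  exact ⟨e i, hi⟩

theorem GroupIndecomp.exists_forall_mem_of_iSup_eq_top {H G : Type u} [Group H] [Group G]
    (hH : GroupIndecomp ℵ₀ H) {K : ℕ → Subgroup G} (hK : Monotone K) (hK_top : ⨆ n, K n = ⊤)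
    (f : H →* G) : ∃ n, ∀ x, f x ∈ K n := by
  have hM : Monotone fun n ↦ (K n).comap f := fun m n hmn ↦ Subgroup.comap_mono (hK hmn)
  have hM_top : ⨆ n, (K n).comap f = ⊤ := eq_top_iff.2 fun x _ ↦
    (Subgroup.mem_iSup_of_directed hM.directed_le).2 <|
      (Subgroup.mem_iSup_of_directed hK.directed_le).1 (hK_top.ge (Subgroup.mem_top (f x)))
  obtain ⟨n, hn⟩ := hH.exists_eq_top_of_nat hM hM_top
  exact ⟨n, fun x ↦ hn.ge (Subgroup.mem_top x)⟩

theorem GroupIndecomp.mk_monoidHom_le {H G : Type u} [Group H] [Group G]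
    (hH : GroupIndecomp ℵ₀ H) {K : ℕ → Subgroup G} (hK : Monotone K) (hK_top : ⨆ n, K n = ⊤)
    {μ : Cardinal.{u}} (hμ : ℵ₀ ≤ μ) (hK_pow : ∀ n, #(K n) ^ #H ≤ μ) : #(H →* G) ≤ μ := by
  have hsurj : Function.Surjective fun p : Σ n, H →* K n ↦ (K p.1).subtype.comp p.2 := fun f ↦ by
    obtain ⟨n, hn⟩ := hH.exists_forall_mem_of_iSup_eq_top hK hK_top f
    exact ⟨⟨n, f.codRestrict (K n) hn⟩, rfl⟩
  calc #(H →* G) ≤ #(Σ n, H →* K n) := mk_le_of_surjective hsurj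
    _ ≤ sum fun _ : ℕ ↦ μ := by
      rw [mk_sigma]; exact sum_le_sum _ _ fun n ↦ (mk_monoidHom_le_power H (K n)).trans (hK_pow n)
    _ = μ := by simp [mul_eq_right hμ hμ aleph0_ne_zero]

theorem universal_implies_family_general (μ : Cardinal.{u})
    (hsl : μ.IsStrongLimit) (hcof : μ.ord.cof = ℵ₀)
    (huniv : ∃ (G : Type u) (_ : Group G), UniversalLF μ G)
    (lam : Cardinal.{u}) (hlam : lam < μ)
    (H : Type u) [Group H]
    (hHind : GroupIndecomp ℵ₀ H) (hHc : #H = lam) :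
    ∃ (I : Type u), #I ≤ μ ∧
      ∃ (Gf : I → Type u) (_ : ∀ α, Group (Gf α)) (e : ∀ α, H →* Gf α),
        (∀ α, LocallyFiniteGroup (Gf α) ∧ #(Gf α) = μ ∧ Function.Injective (e α)) ∧
        ∀ (G : Type u) (_ : Group G), LocallyFiniteGroup G → #G = μ →
          ∀ eG : H →* G, Function.Injective eG →
            ∃ α, ∃ f : G →* Gf α, Function.Injective f ∧ f.comp eG = e α := by
  obtain ⟨U, _, hU_lf, hU_card, hU_univ⟩ := huniv
  subst hU_card hHc
  obtain ⟨K, hK, hK_top, hK_card⟩ := hU_lf.exists_monotone_iSup_eq_top hcof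
  refine ⟨{p : H →* U // Function.Injective p}, ?_, fun _ ↦ U, fun _ ↦ inferInstance,
    fun p ↦ p.1, fun p ↦ ⟨hU_lf, rfl, p.2⟩, ?_⟩
  · exact (mk_subtype_le _).trans <| hHind.mk_monoidHom_le hK hK_top hsl.aleph0_le
      fun n ↦ (hsl.power_lt (hK_card n) hlam).le
  · intro G _ hG_lf hG_card eG heG
    obtain ⟨f, hf⟩ := hU_univ G _ hG_lf hG_card
    exact ⟨⟨f.comp eG, hf.comp heG⟩, f, hf, rfl⟩

/-- If `μ` is a strong limit cardinal of cofinality `ℵ₀` and there is a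
universal locally finite group of cardinality `μ`, then for every `λ < μ` and every
`ℵ₀`-indecomposable locally finite group `H` of cardinality `λ` there is a family
`⟨G_α : α ∈ I⟩`, `|I| ≤ μ`, of locally finite groups of cardinality `μ` extending `H`
such that every locally finite group of cardinality `μ` extending `H` embeds into some
`G_α` over `H`. -/
theorem universal_implies_family (μ : Cardinal.{u})
    (hsl : μ.IsStrongLimit) (hcof : μ.ord.cof = ℵ₀)
    (huniv : ∃ (G : Type u) (_ : Group G), UniversalLF μ G)
    (lam : Cardinal.{u}) (hlam : lam < μ)
    (H : Type u) [Group H] (hH : LocallyFiniteGroup H)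
    (hHind : GroupIndecomp ℵ₀ H) (hHc : #H = lam) :
    ∃ (I : Type u), #I ≤ μ ∧
      ∃ (Gf : I → Type u) (_ : ∀ α, Group (Gf α)) (e : ∀ α, H →* Gf α),
        (∀ α, LocallyFiniteGroup (Gf α) ∧ #(Gf α) = μ ∧ Function.Injective (e α)) ∧
        ∀ (G : Type u) (_ : Group G), LocallyFiniteGroup G → #G = μ →
          ∀ eG : H →* G, Function.Injective eG →
            ∃ α, ∃ f : G →* Gf α, Function.Injective f ∧ f.comp eG = e α :=
  universal_implies_family_general μ hsl hcof huniv lam hlam H hHind hHc
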